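/- Let (X_{nk}) be a d-dimensional martingale difference array satisfying (CLB₁^d). Then for every a > 0, max_{1≤k≤k_n} ‖X_{nk}(a)‖ → 0 in probability as n → ∞, where X_{nk}(a) = X_{nk} 1_{{‖X_{nk}‖ ≤ a}} − E(X_{nk} 1_{{‖X_{nk}‖ ≤ a}} | F_{n,k-1}). -/

import Mathlib

/-!
Since `E[X_{nk} | F_{n,k-1}] = 0`, the conditional mean of the truncation `X_{nk} 1_{‖X_{nk}‖ ≤ a}`
is minus that of the tail, so conditional Jensen gives
`max_k ‖X_{nk}(a)‖ ≤ max_k ‖X_{nk}‖ + ∑_k E[‖X_{nk}‖ 1_{‖X_{nk}‖ ≥ a} | F_{n,k-1}]`,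
and the sum tends to 0 by (CLB₁^d). For the maximum, `max_k ‖X_{nk}‖ ≥ ε` forces
`∑_k ‖X_{nk}‖ 1_{‖X_{nk}‖ ≥ ε} ≥ ε`, and Lenglart's inequality turns the convergence to 0 of the
compensators of these sums, which is (CLB₁^d) again, into convergence of the sums themselves.
-/

open MeasureTheory Filter

theorem sum_ite_partialSum_le {z : ℕ → ℝ} (hz : ∀ k, 0 ≤ z k) {δ : ℝ} (hδ : 0 ≤ δ) (m : ℕ) :
    ∑ k ∈ Finset.Icc 1 m, (if ∑ j ∈ Finset.Icc 1 k, z j ≤ δ then z k else 0) ≤ δ := by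
  induction m with
  | zero => simpa using hδ
  | succ m ih =>
    by_cases hm : ∑ j ∈ Finset.Icc 1 (m + 1), z j ≤ δ
    · refine le_trans (Finset.sum_le_sum fun k _ => ?_) hm
      split_ifs
      exacts [le_rfl, hz k]
    · rw [Finset.sum_Icc_succ_top (by omega), if_neg hm, add_zero]
      exact ih

section Lenglart

variable {Ω : Type*} {m0 : MeasurableSpace Ω} {μ : Measure Ω} {F : ℕ → MeasurableSpace Ω}
  {Y : ℕ → Ω → ℝ}

variable (μ F Y) in
noncomputable def compensator (m : ℕ) : Ω → ℝ :=
  fun ω => ∑ k ∈ Finset.Icc 1 m, (μ[Y k | F (k - 1)]) ω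

theorem stronglyMeasurable_compensator (hF : Monotone F) (m : ℕ) :
    StronglyMeasurable[F (m - 1)] (compensator μ F Y m) :=
  Finset.stronglyMeasurable_fun_sum _ fun _ hk =>
    stronglyMeasurable_condExp.mono (hF (Nat.sub_le_sub_right (Finset.mem_Icc.mp hk).2 1))

theorem measurableSet_compensator_le (hF : Monotone F) (m : ℕ) (δ : ℝ) :
    MeasurableSet[F (m - 1)] {ω | compensator μ F Y m ω ≤ δ} :=
  measurableSet_le (stronglyMeasurable_compensator hF m).measurable measurable_const

theorem ae_forall_condExp_nonneg (hY_nonneg : ∀ k, 0 ≤ Y k) :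
    ∀ᵐ ω ∂μ, ∀ k, 0 ≤ μ[Y k | F (k - 1)] ω :=
  ae_all_iff.mpr fun k => condExp_nonneg (ae_of_all _ (hY_nonneg k))

/-- The sum of `Y` stopped when the compensator first exceeds `δ` has expectation at most `δ`. -/
theorem integral_sum_indicator_compensator_le [IsProbabilityMeasure μ] (hF : Monotone F)
    (hFle : ∀ k, F k ≤ m0) (hY_nonneg : ∀ k, 0 ≤ Y k) (hY_int : ∀ k, Integrable (Y k) μ)
    {δ : ℝ} (hδ : 0 ≤ δ) (m : ℕ) :
    ∫ ω, ∑ k ∈ Finset.Icc 1 m,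
      {ω | compensator μ F Y k ω ≤ δ}.indicator (Y k) ω ∂μ ≤ δ := by
  set G : ℕ → Set Ω := fun k => {ω | compensator μ F Y k ω ≤ δ}
  have hG_meas : ∀ k, MeasurableSet[F (k - 1)] (G k) := fun k =>
    measurableSet_compensator_le hF k δ
  have hG_meas' : ∀ k, MeasurableSet (G k) := fun k => hFle _ _ (hG_meas k)
  -- `G k` is known at time `k - 1`, so on it `Y k` may be replaced by its conditional expectation.
  calc ∫ ω, ∑ k ∈ Finset.Icc 1 m, (G k).indicator (Y k) ω ∂μ
      = ∫ ω, ∑ k ∈ Finset.Icc 1 m, (G k).indicator (μ[Y k | F (k - 1)]) ω ∂μ := by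
        rw [integral_finsetSum _ fun k _ => (hY_int k).indicator (hG_meas' k),
          integral_finsetSum _ fun k _ => integrable_condExp.indicator (hG_meas' k)]
        refine Finset.sum_congr rfl fun k _ => ?_
        rw [integral_indicator (hG_meas' k), integral_indicator (hG_meas' k),
          setIntegral_condExp (hFle (k - 1)) (hY_int k) (hG_meas k)]
    _ ≤ ∫ _, δ ∂μ := by
        refine integral_mono_ae (integrable_finsetSum _ fun k _ =>
          integrable_condExp.indicator (hG_meas' k)) (integrable_const δ) ?_
        filter_upwards [ae_forall_condExp_nonneg hY_nonneg] with ω hω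
        simp only [Set.indicator_apply]
        exact sum_ite_partialSum_le hω hδ m
    _ = δ := by simp

/-- Lenglart's inequality. -/
theorem measureReal_le_sum_le_div_add_measureReal_lt_compensator [IsProbabilityMeasure μ]
    (hF : Monotone F) (hFle : ∀ k, F k ≤ m0) (hY_nonneg : ∀ k, 0 ≤ Y k)
    (hY_int : ∀ k, Integrable (Y k) μ) {ε δ : ℝ} (hε : 0 < ε) (hδ : 0 ≤ δ) (m : ℕ) :
    μ.real {ω | ε ≤ ∑ k ∈ Finset.Icc 1 m, Y k ω} ≤
      δ / ε + μ.real {ω | δ < compensator μ F Y m ω} := by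
  set W : Ω → ℝ := fun ω => ∑ k ∈ Finset.Icc 1 m,
    {ω | compensator μ F Y k ω ≤ δ}.indicator (Y k) ω
  have hW_markov : μ.real {ω | ε ≤ W ω} ≤ δ / ε := by
    rw [le_div_iff₀ hε, mul_comm]
    refine (mul_meas_ge_le_integral_of_nonneg (ae_of_all _ fun ω => Finset.sum_nonneg
      fun k _ => Set.indicator_nonneg (fun ω _ => hY_nonneg k ω) _) ?_ ε).trans
      (integral_sum_indicator_compensator_le hF hFle hY_nonneg hY_int hδ m)
    exact integrable_finsetSum _ fun k _ =>
      (hY_int k).indicator (hFle _ _ (measurableSet_compensator_le hF k δ))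
  have hsub : {ω | ε ≤ ∑ k ∈ Finset.Icc 1 m, Y k ω} ≤ᵐ[μ]
      ({ω | ε ≤ W ω} ∪ {ω | δ < compensator μ F Y m ω} : Set Ω) := by
    filter_upwards [ae_forall_condExp_nonneg hY_nonneg] with ω hω hε_le
    refine (le_or_gt _ δ).imp (fun hm => ?_) id
    have hG : ∀ k ∈ Finset.Icc 1 m, ω ∈ {ω | compensator μ F Y k ω ≤ δ} := fun k hk =>
      le_trans (Finset.sum_le_sum_of_subset_of_nonneg
        (Finset.Icc_subset_Icc_right (Finset.mem_Icc.mp hk).2) fun j _ _ => hω j) hm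
    change ε ≤ ∑ k ∈ Finset.Icc 1 m, _
    rwa [Finset.sum_congr rfl fun k hk => Set.indicator_of_mem (hG k hk) (Y k)]
  calc μ.real {ω | ε ≤ ∑ k ∈ Finset.Icc 1 m, Y k ω}
      ≤ μ.real ({ω | ε ≤ W ω} ∪ {ω | δ < compensator μ F Y m ω}) :=
        ENNReal.toReal_mono (measure_ne_top _ _) (measure_mono_ae hsub)
    _ ≤ μ.real {ω | ε ≤ W ω} + μ.real {ω | δ < compensator μ F Y m ω} :=
        measureReal_union_le _ _
    _ ≤ _ := by gcongr

end Lenglart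

section ConvergenceInMeasure

variable {α ι E : Type*} {m : MeasurableSpace α} {μ : Measure α} {l : Filter ι}

theorem MeasureTheory.TendstoInMeasure.add [SeminormedAddCommGroup E] {f g : ι → α → E}
    {F G : α → E} (hf : TendstoInMeasure μ f l F) (hg : TendstoInMeasure μ g l G) :
    TendstoInMeasure μ (f + g) l (F + G) := by
  rw [tendstoInMeasure_iff_norm] at hf hg ⊢
  intro ε hε
  have hsub : ∀ i, {x | ε ≤ ‖(f + g) i x - (F + G) x‖} ⊆
      {x | ε / 2 ≤ ‖f i x - F x‖} ∪ {x | ε / 2 ≤ ‖g i x - G x‖} := by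
    intro i x hx
    by_contra! h
    simp only [Set.mem_union, Set.mem_ofPred_eq, not_or, not_le] at h
    have : ‖(f i x - F x) + (g i x - G x)‖ < ε :=
      (norm_add_le _ _).trans_lt (by linarith [h.1, h.2])
    exact this.not_ge (by simpa [add_sub_add_comm] using hx)
  refine tendsto_of_tendsto_of_tendsto_of_le_of_le tendsto_const_nhds
    (by simpa using (hf _ (half_pos hε)).add (hg _ (half_pos hε))) (fun _ => zero_le)
    fun i => (measure_mono (hsub i)).trans (measure_union_le _ _)

theorem tendstoInMeasure_zero_of_norm_le [SeminormedAddCommGroup E] {f : ι → α → E}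
    {g : ι → α → ℝ} (hg : TendstoInMeasure μ g l 0) (hfg : ∀ i, ∀ᵐ x ∂μ, ‖f i x‖ ≤ g i x) :
    TendstoInMeasure μ f l 0 := by
  rw [tendstoInMeasure_iff_norm] at hg ⊢
  refine fun ε hε => tendsto_of_tendsto_of_tendsto_of_le_of_le tendsto_const_nhds (hg ε hε)
    (fun _ => zero_le) fun i => measure_mono_ae ?_
  filter_upwards [hfg i] with x hx hεx
  simp only [Pi.zero_apply, sub_zero] at hεx ⊢
  exact (hεx.trans hx).trans (le_abs_self _)

end ConvergenceInMeasure

section MartingaleDifferenceArray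

variable {Ω ι : Type*} {m0 : MeasurableSpace Ω} {μ : Measure Ω} {l : Filter ι}
  {𝓕 : ι → ℕ → MeasurableSpace Ω} {kn : ι → ℕ}

theorem tendstoInMeasure_sum_of_tendstoInMeasure_compensator [IsProbabilityMeasure μ]
    (hF : ∀ i, Monotone (𝓕 i)) (hFle : ∀ i k, 𝓕 i k ≤ m0) {Y : ι → ℕ → Ω → ℝ}
    (hY_nonneg : ∀ i k, 0 ≤ Y i k) (hY_int : ∀ i k, Integrable (Y i k) μ)
    (h : TendstoInMeasure μ (fun i => compensator μ (𝓕 i) (Y i) (kn i)) l 0) :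
    TendstoInMeasure μ (fun i ω => ∑ k ∈ Finset.Icc 1 (kn i), Y i k ω) l 0 := by
  rw [tendstoInMeasure_iff_measureReal_dist] at h ⊢
  intro ε hε
  refine Metric.tendsto_nhds.2 fun η hη => ?_
  filter_upwards [Metric.tendsto_nhds.1 (h (η * ε / 2) (by positivity)) (η / 2) (half_pos hη)]
    with i hi
  simp only [Real.dist_0_eq_abs, Pi.zero_apply, abs_of_nonneg measureReal_nonneg] at hi ⊢
  have hsum_nonneg : ∀ ω, 0 ≤ ∑ k ∈ Finset.Icc 1 (kn i), Y i k ω := fun ω =>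
    Finset.sum_nonneg fun k _ => hY_nonneg i k ω
  calc μ.real {ω | ε ≤ |∑ k ∈ Finset.Icc 1 (kn i), Y i k ω|}
      = μ.real {ω | ε ≤ ∑ k ∈ Finset.Icc 1 (kn i), Y i k ω} := by
        simp only [abs_of_nonneg (hsum_nonneg _)]
    _ ≤ η * ε / 2 / ε + μ.real {ω | η * ε / 2 < compensator μ (𝓕 i) (Y i) (kn i) ω} :=
        measureReal_le_sum_le_div_add_measureReal_lt_compensator (hF i) (hFle i) (hY_nonneg i)
          (hY_int i) hε (by positivity) (kn i)
    _ ≤ η / 2 + μ.real {ω | η * ε / 2 ≤ |compensator μ (𝓕 i) (Y i) (kn i) ω|} := by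
        refine add_le_add (le_of_eq (by field_simp)) (measureReal_mono fun ω hω => ?_)
        simp only [Set.mem_ofPred_eq] at hω ⊢
        exact hω.le.trans (le_abs_self _)
    _ < η := by linarith

theorem tendstoInMeasure_sup'_norm_of_condLindeberg {E : Type*} [NormedAddCommGroup E]
    [IsProbabilityMeasure μ] (hF : ∀ i, Monotone (𝓕 i)) (hFle : ∀ i k, 𝓕 i k ≤ m0)
    {X : ι → ℕ → Ω → E} (hX_meas : ∀ i k, StronglyMeasurable (X i k))
    (hX_int : ∀ i k, Integrable (X i k) μ) (hkn : ∀ i, (Finset.Icc 1 (kn i)).Nonempty)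
    (hCLB : ∀ ε > (0 : ℝ), TendstoInMeasure μ (fun i => compensator μ (𝓕 i)
      (fun k => {ω | ε ≤ ‖X i k ω‖}.indicator (fun ω => ‖X i k ω‖)) (kn i)) l 0) :
    TendstoInMeasure μ (fun i ω => (Finset.Icc 1 (kn i)).sup' (hkn i) fun k => ‖X i k ω‖) l 0 := by
  rw [tendstoInMeasure_iff_dist]
  intro ε hε
  have hsum := tendstoInMeasure_iff_dist.1 (tendstoInMeasure_sum_of_tendstoInMeasure_compensator
    (Y := fun i k => {ω | ε ≤ ‖X i k ω‖}.indicator fun ω => ‖X i k ω‖) hF hFle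
    (fun i k ω => Set.indicator_nonneg (fun _ _ => norm_nonneg _) ω)
    (fun i k => (hX_int i k).norm.indicator
      (measurableSet_le measurable_const (hX_meas i k).norm.measurable)) (hCLB ε hε)) ε hε
  refine tendsto_of_tendsto_of_tendsto_of_le_of_le tendsto_const_nhds hsum (fun _ => zero_le)
    fun i => measure_mono fun ω hω => ?_
  simp only [Set.mem_ofPred_eq, Real.dist_0_eq_abs, Pi.zero_apply] at hω ⊢
  rw [abs_of_nonneg (Finset.le_sup'_of_le _ (hkn i).choose_spec (by positivity))] at hω
  obtain ⟨k, hk, hεk⟩ := (Finset.le_sup'_iff _).1 hω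
  calc ε ≤ {ω | ε ≤ ‖X i k ω‖}.indicator (fun ω => ‖X i k ω‖) ω := by
        rwa [Set.indicator_of_mem (show ω ∈ {ω | ε ≤ ‖X i k ω‖} from hεk)]
    _ ≤ ∑ j ∈ Finset.Icc 1 (kn i), {ω | ε ≤ ‖X i j ω‖}.indicator (fun ω => ‖X i j ω‖) ω :=
        Finset.single_le_sum (f := fun j => {ω | ε ≤ ‖X i j ω‖}.indicator (fun ω => ‖X i j ω‖) ω)
          (fun j _ => Set.indicator_nonneg (fun _ _ => norm_nonneg _) ω) hk
    _ ≤ _ := le_abs_self _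

end MartingaleDifferenceArray

theorem ae_norm_condExp_indicator_le_condExp_tail {Ω E : Type*} [NormedAddCommGroup E]
    [NormedSpace ℝ E] [CompleteSpace E] {m m0 : MeasurableSpace Ω} {μ : Measure Ω}
    {f : Ω → E} (hf_meas : StronglyMeasurable f) (hf_int : Integrable f μ)
    (hf_mean : μ[f | m] =ᵐ[μ] 0) (a : ℝ) :
    ∀ᵐ ω ∂μ, ‖(μ[{ω | ‖f ω‖ ≤ a}.indicator f | m]) ω‖ ≤
      (μ[{ω | a ≤ ‖f ω‖}.indicator (fun ω => ‖f ω‖) | m]) ω := by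
  set t := {ω | a < ‖f ω‖}
  have ht : MeasurableSet t := measurableSet_lt measurable_const hf_meas.norm.measurable
  have ht_compl : {ω | ‖f ω‖ ≤ a} = tᶜ := by ext; simp [t]
  have h_tail : ∀ ω, ‖t.indicator f ω‖ ≤ {ω | a ≤ ‖f ω‖}.indicator (fun ω => ‖f ω‖) ω := by
    intro ω
    rw [norm_indicator_eq_indicator_norm]
    exact Set.indicator_le_indicator_of_subset (s := t) (t := {ω | a ≤ ‖f ω‖})
      (f := fun ω => ‖f ω‖) (fun _ (hx : a < _) => hx.le) (fun _ => norm_nonneg _) ω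
  rw [ht_compl, Set.indicator_compl]
  filter_upwards [condExp_sub hf_int (hf_int.indicator ht) m, hf_mean,
    norm_condExp_le (μ := μ) (m := m) (t.indicator f),
    condExp_mono (m := m) (hf_int.indicator ht).norm
      (hf_int.norm.indicator (measurableSet_le measurable_const hf_meas.norm.measurable))
      (ae_of_all _ h_tail)] with ω h_sub h_mean h_norm h_mono
  rw [h_sub, Pi.sub_apply, h_mean, Pi.zero_apply, zero_sub, norm_neg]
  exact h_norm.trans h_mono

/-- For a `d`-dimensional martingale difference array satisfying the conditional
L₁-Lindeberg condition (CLB₁^d), for every `a > 0` one has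
`max_{1≤k≤k_n} ‖X_{nk}(a)‖ → 0` in probability, where
`X_{nk}(a) = X_{nk} 1_{‖X_{nk}‖ ≤ a} − E(X_{nk} 1_{‖X_{nk}‖ ≤ a} | F_{n,k-1})`. -/
theorem stmt8 {Ω : Type*} {m0 : MeasurableSpace Ω} (μ : Measure Ω) [IsProbabilityMeasure μ]
    {d : ℕ} (kn : ℕ → ℕ) (hkn : ∀ n, 1 ≤ kn n)
    (𝓕 : ℕ → ℕ → MeasurableSpace Ω)
    (hFmono : ∀ n, Monotone (𝓕 n)) (hFle : ∀ n k, 𝓕 n k ≤ m0)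
    (X : ℕ → ℕ → Ω → EuclideanSpace ℝ (Fin d))
    (hadapted : ∀ n k, StronglyMeasurable[𝓕 n k] (X n k))
    (hint : ∀ n k, Integrable (X n k) μ)
    (hmds : ∀ n k, k ∈ Finset.Icc 1 (kn n) → μ[X n k | 𝓕 n (k - 1)] =ᵐ[μ] 0)
    (hCLB1 : ∀ ε > (0 : ℝ), TendstoInMeasure μ
      (fun n ω => ∑ k ∈ Finset.Icc 1 (kn n),
        (μ[Set.indicator {ω'' | ε ≤ ‖X n k ω''‖} (fun ω'' => ‖X n k ω''‖) | 𝓕 n (k - 1)]) ω)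
      atTop (fun _ => 0)) :
    ∀ a > (0 : ℝ), TendstoInMeasure μ
      (fun n ω => (Finset.Icc 1 (kn n)).sup' (Finset.nonempty_Icc.mpr (hkn n))
        (fun k => ‖Set.indicator {ω'' | ‖X n k ω''‖ ≤ a} (X n k) ω
          - (μ[Set.indicator {ω'' | ‖X n k ω''‖ ≤ a} (X n k) | 𝓕 n (k - 1)]) ω‖))
      atTop (fun _ => 0) := by
  intro a ha
  have hX_meas : ∀ n k, StronglyMeasurable (X n k) := fun n k => (hadapted n k).mono (hFle n k)
  have hmax := tendstoInMeasure_sup'_norm_of_condLindeberg hFmono hFle hX_meas hint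
    (fun n => Finset.nonempty_Icc.mpr (hkn n)) hCLB1
  set T : ℕ → ℕ → Ω → ℝ := fun n k =>
    μ[{ω | a ≤ ‖X n k ω‖}.indicator (fun ω => ‖X n k ω‖) | 𝓕 n (k - 1)]
  have hT : ∀ n, ∀ᵐ ω ∂μ, ∀ k ∈ Finset.Icc 1 (kn n),
      ‖(μ[{ω | ‖X n k ω‖ ≤ a}.indicator (X n k) | 𝓕 n (k - 1)]) ω‖ ≤ T n k ω ∧ 0 ≤ T n k ω :=
    fun n => (eventually_all_finset _).2 fun k hk =>
      (ae_norm_condExp_indicator_le_condExp_tail (hX_meas n k) (hint n k) (hmds n k hk) a).and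
        (condExp_nonneg (ae_of_all _ fun ω => Set.indicator_nonneg (fun _ _ => norm_nonneg _) ω))
  have hbound : TendstoInMeasure μ (fun n ω => (Finset.Icc 1 (kn n)).sup'
      (Finset.nonempty_Icc.mpr (hkn n)) (fun k => ‖X n k ω‖) + ∑ k ∈ Finset.Icc 1 (kn n), T n k ω)
      atTop 0 :=
    TendstoInMeasure.congr_right (ae_of_all _ fun _ => add_zero 0) (hmax.add (hCLB1 a ha))
  refine tendstoInMeasure_zero_of_norm_le hbound fun n => ?_
  filter_upwards [hT n] with ω hω
  rw [Real.norm_of_nonneg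
    (Finset.le_sup'_of_le _ (Finset.right_mem_Icc.2 (hkn n)) (by positivity))]
  refine Finset.sup'_le _ _ fun k hk => (norm_sub_le _ _).trans (add_le_add ?_ ?_)
  · exact (norm_indicator_le_norm_self _ _).trans (Finset.le_sup' (fun k => ‖X n k ω‖) hk)
  · exact (hω k hk).1.trans (Finset.single_le_sum (fun j hj => (hω j hj).2) hk)
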